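/- Stabilizer of a rooted ribbon graph under edge twists: let G be a rooted, connected ribbon graph, and let the group T = (Z/2)^{E(G)} act on G by twisting subsets of its ribbon edges (with the root vertex's embedding held fixed). Then the stabilizer of G under T has cardinality 2^{V₁ + V₂}, where V₁ and V₂ are the numbers of non-root vertices of degree one and two respectively. Consequently |Orb_T(G)| = 2^{E(G) - V₁ - V₂}. -/

import Mathlib

/-!
Re-embedding a set `B` of non-root vertices at once reverses the rotation on `B` and twists
each edge `{h, α h}` once per end in `B`, i.e. by the coboundary `δB h = B h + B (α h)`.
Conversely every configuration equivalent to `(π, τ)` is of this form, since the set of such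
configurations is closed under single re-embeddings. Hence the twist `s` fixes the class of
`(π, τ)` iff `s = δB` for a set `B` of non-root vertices on which reversal does nothing, that
is, vertices of degree one or two; by connectivity `B ↦ δB` is injective. These `B` are the
Boolean functions invariant under the involution `π` on the half-edges at such vertices, so
there are `2 ^ (V₁ + V₂)` of them, and orbit-stabilizer for the `2 ^ E` edge twists gives the
orbit.
-/

/-- A configuration of a ribbon graph on a fixed set of half-edges: the vertex rotation
(a permutation of the half-edges) together with the twist bits on half-edges. -/
abbrev RibbonConfig (H : Type*) := Equiv.Perm H × (H → Bool)

open Classical in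
/-- Re-embedding of a single non-root vertex: the cyclic order of the half-edges at the
vertex (the `π`-cycle of `v`) is reversed, and every edge incident to that vertex gains a
twist (once per incident half-edge, so self-loops are twisted twice). -/
def ReEmbed {H : Type*} (α : Equiv.Perm H) (root : H) (c c' : RibbonConfig H) : Prop :=
  ∃ v : H, ¬ c.1.SameCycle root v ∧
    (∀ h, c'.1 h = if c.1.SameCycle v h then c.1⁻¹ h else c.1 h) ∧
    (∀ h, c'.2 h = xor (c.2 h)
      (xor (if c.1.SameCycle v h then true else false)
           (if c.1.SameCycle v (α h) then true else false)))

open Equiv Function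

namespace Function.Involutive

variable {X : Type*} [Finite X] {σ : X → X}

theorem card_invariant_bool_fun_of_forall_ne (hσ : Involutive σ) (hfree : ∀ x, σ x ≠ x)
    {m : ℕ} (hm : 2 * m = Nat.card X) :
    Nat.card {g : X → Bool // ∀ x, g (σ x) = g x} = 2 ^ m := by
  let r : Setoid X :=
    { r := fun x y => y = x ∨ y = σ x
      iseqv := ⟨fun _ => .inl rfl, fun {x y} => by rintro (rfl | rfl) <;> simp [hσ _],
        fun {x y z} => by rintro (rfl | rfl) (rfl | rfl) <;> simp [hσ _]⟩ }
  have hfiber : ∀ q : Quotient r, Nat.card {x // Quotient.mk r x = q} = 2 := by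
    refine Quotient.ind fun x => ?_
    have hpair : {y | Quotient.mk r y = Quotient.mk r x} = {x, σ x} := by
      ext y
      rw [Set.mem_ofPred_eq, Quotient.eq]
      change x = y ∨ x = σ y ↔ y = x ∨ y = σ x
      rw [eq_comm, eq_comm (a := x), hσ.eq_iff]
    rw [← Set.ncard_pair (hfree x).symm, ← hpair, ← Nat.card_coe_set_eq]
    rfl
  have hcard : Nat.card X = Nat.card (Quotient r) * 2 := by
    have := Fintype.ofFinite (Quotient r)
    rw [← Nat.card_congr (Equiv.sigmaFiberEquiv (Quotient.mk r)), Nat.card_sigma]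
    simp [hfiber]
  let e : {g : X → Bool // ∀ x, g (σ x) = g x} ≃ (Quotient r → Bool) :=
    { toFun g := Quotient.lift g.1 (by rintro x y (rfl | rfl) <;> simp [g.2])
      invFun g := ⟨g ∘ Quotient.mk r, fun x =>
        congrArg g (Quotient.sound (Or.inr rfl : σ x = x ∨ σ x = σ x)).symm⟩
      left_inv _ := rfl
      right_inv g := funext (Quotient.ind fun _ => rfl) }
  rw [Nat.card_congr e, Nat.card_fun, Nat.card_eq_fintype_card, Fintype.card_bool]
  congr
  omega

theorem card_invariant_bool_fun (hσ : Involutive σ) {a b : ℕ}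
    (ha : a = Nat.card {x // σ x = x}) (hb : 2 * b = Nat.card {x // σ x ≠ x}) :
    Nat.card {g : X → Bool // ∀ x, g (σ x) = g x} = 2 ^ (a + b) := by
  classical
  let σ' : {x // σ x ≠ x} → {x // σ x ≠ x} := fun x => ⟨σ x, fun h => x.2 (hσ.injective h)⟩
  let e : {g : X → Bool // ∀ x, g (σ x) = g x} ≃
      ({x // σ x = x} → Bool) × {g : {x // σ x ≠ x} → Bool // ∀ x, g (σ' x) = g x} :=
    { toFun g := (fun x => g.1 x, ⟨fun x => g.1 x, fun x => g.2 x⟩)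
      invFun p := ⟨fun x => if hx : σ x = x then p.1 ⟨x, hx⟩ else p.2.1 ⟨x, hx⟩, fun x => by
        beta_reduce
        by_cases hx : σ x = x
        · simp only [hx]
        · rw [dif_neg hx, dif_neg fun h => hx (hσ.injective h)]
          exact p.2.2 ⟨x, hx⟩⟩
      left_inv g := Subtype.ext (funext fun x => by by_cases hx : σ x = x <;> simp [hx])
      right_inv p := Prod.ext (funext fun x => dif_pos x.2)
        (Subtype.ext (funext fun x => dif_neg x.2)) }
  have hσ' : Involutive σ' := fun x => Subtype.ext (hσ x)
  rw [Nat.card_congr e, Nat.card_prod, Nat.card_fun, ← ha,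
    hσ'.card_invariant_bool_fun_of_forall_ne (fun x h => x.2 (congrArg Subtype.val h)) hb,
    pow_add]
  simp

end Function.Involutive

theorem eq_pow_sub_of_mul_pow_eq {a p k n : ℕ} (hp : 1 < p) (h : a * p ^ k = p ^ n) :
    a = p ^ (n - k) := by
  have hk : k ≤ n := (Nat.pow_dvd_pow_iff_le_right hp).1 ⟨a, by rw [← h, mul_comm]⟩
  rw [Nat.eq_div_of_mul_eq_left (by positivity) h, Nat.pow_div hk (by omega)]

namespace Equiv.Perm

variable {H β : Type*}

theorem apply_eq_of_mem_closure {S : Set (Perm H)} {B : H → β}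
    (hS : ∀ g ∈ S, ∀ h, B (g h) = B h) {g : Perm H} (hg : g ∈ Subgroup.closure S) :
    ∀ h, B (g h) = B h := by
  induction hg using Subgroup.closure_induction with
  | mem g hg => exact hS g hg
  | one => exact fun _ => rfl
  | mul g₁ g₂ _ _ h₁ h₂ => exact fun h => (h₁ (g₂ h)).trans (h₂ h)
  | inv g _ hg => exact fun h => by rw [← hg (g⁻¹ h)]; simp

theorem SameCycle.apply_eq {f : Perm H} {B : H → β} (hB : ∀ h, B (f h) = B h) {x y : H}
    (hxy : f.SameCycle x y) : B x = B y := by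
  obtain ⟨i, rfl⟩ := hxy
  have hi : f ^ i ∈ Subgroup.closure ({f} : Set (Perm H)) :=
    Subgroup.mem_closure_singleton.2 ⟨i, _root_.rfl⟩
  exact (apply_eq_of_mem_closure (by rintro g rfl; exact hB) hi x).symm

theorem SameCycle.of_forall_sameCycle_apply {f ρ : Perm H} (hρ : ∀ x, f.SameCycle x (ρ x))
    {x y : H} (hxy : ρ.SameCycle x y) : f.SameCycle x y :=
  hxy.apply_eq (B := f.SameCycle x) (fun h => propext ⟨fun hx => hx.trans (hρ h).symm,
    fun hx => hx.trans (hρ h)⟩) ▸ SameCycle.rfl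

theorem apply_symm_eq_of_invariant {f : Perm H} {B : H → β} (hB : ∀ h, B (f h) = B h)
    (h : H) : B (f.symm h) = B h := by
  simpa using (hB (f.symm h)).symm

-- Spelled exactly as in `ReEmbed`, whose twist update is then `edgeCoboundary` of it by `rfl`.
open Classical in
noncomputable def cycleIndicator (f : Perm H) (v : H) : H → Bool :=
  fun h => if f.SameCycle v h then true else false

theorem cycleIndicator_apply_eq_true {f : Perm H} {v h : H} :
    f.cycleIndicator v h = true ↔ f.SameCycle v h := by
  simp [cycleIndicator]

theorem cycleIndicator_apply_self {f : Perm H} (v h : H) :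
    f.cycleIndicator v (f h) = f.cycleIndicator v h := by
  simp [cycleIndicator, sameCycle_apply_right]

theorem setOf_add_cycleIndicator_ssubset {f : Perm H} {B : H → Bool}
    (hB : ∀ h, B (f h) = B h) {v : H} (hv : B v = true) :
    {h | (B + f.cycleIndicator v) h = true} ⊂ {h | B h = true} := by
  refine Set.ssubset_iff_of_subset (fun h hh => ?_) |>.2 ⟨v, hv, ?_⟩
  · by_cases hvh : f.SameCycle v h
    · exact (hvh.apply_eq hB).symm.trans hv
    · simpa [cycleIndicator, hvh, Bool.add_eq_xor] using hh
  · simp [cycleIndicator, hv, Bool.add_eq_xor, SameCycle.rfl]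

def reverseAlong (f : Perm H) (B : H → Bool) (hB : ∀ h, B (f h) = B h) : Perm H where
  toFun h := if B h then f⁻¹ h else f h
  invFun h := if B h then f h else f⁻¹ h
  left_inv h := by cases hh : B h <;> simp [hh, hB, apply_symm_eq_of_invariant hB]
  right_inv h := by cases hh : B h <;> simp [hh, hB, apply_symm_eq_of_invariant hB]

variable {f : Perm H} {B : H → Bool} {hB : ∀ h, B (f h) = B h}

theorem reverseAlong_apply (h : H) :
    f.reverseAlong B hB h = if B h then f⁻¹ h else f h := rfl

theorem inv_reverseAlong_apply (h : H) :
    (f.reverseAlong B hB)⁻¹ h = if B h then f h else f⁻¹ h := rfl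

theorem apply_reverseAlong_of_invariant {C : H → β} (hC : ∀ h, C (f h) = C h) (h : H) :
    C (f.reverseAlong B hB h) = C h := by
  rw [reverseAlong_apply]
  split
  · exact apply_symm_eq_of_invariant hC h
  · exact hC h

theorem sameCycle_reverseAlong {x y : H} :
    (f.reverseAlong B hB).SameCycle x y ↔ f.SameCycle x y := by
  constructor <;> refine SameCycle.of_forall_sameCycle_apply fun h => ?_
  · rw [reverseAlong_apply]
    split
    · exact ⟨-1, by simp⟩
    · exact ⟨1, by simp⟩
  · by_cases hh : B h
    · exact ⟨-1, by rw [zpow_neg_one, inv_reverseAlong_apply, if_pos hh]⟩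
    · exact ⟨1, by rw [zpow_one, reverseAlong_apply, if_neg hh]⟩

theorem cycleIndicator_reverseAlong :
    (f.reverseAlong B hB).cycleIndicator = f.cycleIndicator := by
  ext v h
  exact Bool.eq_iff_iff.2 (by simp only [cycleIndicator_apply_eq_true, sameCycle_reverseAlong])

theorem reverseAlong_eq_self_iff :
    f.reverseAlong B hB = f ↔ ∀ h, B h = true → f (f h) = h := by
  refine ⟨fun hf h hh => ?_, fun hsq => ext fun h => ?_⟩
  · have := congrArg (· h) hf
    simp only [reverseAlong_apply, if_pos hh] at this
    exact (Perm.inv_eq_iff_eq.1 this).symm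
  · rw [reverseAlong_apply]
    split_ifs with hh
    · exact Perm.inv_eq_iff_eq.2 (hsq h hh).symm
    · rfl

theorem reverseAlong_zero : f.reverseAlong 0 (fun _ => rfl) = f :=
  reverseAlong_eq_self_iff.2 fun _ h => Bool.noConfusion h

theorem reverseAlong_reverseAlong {C : H → Bool}
    (hC : ∀ h, C (f.reverseAlong B hB h) = C h) (hBC : ∀ h, (B + C) (f h) = (B + C) h) :
    (f.reverseAlong B hB).reverseAlong C hC = f.reverseAlong (B + C) hBC := by
  ext h
  simp only [reverseAlong_apply, inv_reverseAlong_apply, Pi.add_apply]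
  rcases Bool.eq_false_or_eq_true (B h) with hb | hb <;>
    rcases Bool.eq_false_or_eq_true (C h) with hc | hc <;> simp [hb, hc, Bool.add_eq_xor]

end Equiv.Perm

open Equiv.Perm

namespace RibbonConfig

variable {H : Type*}

/-- Sets of non-root vertices of the rotation `f`, encoded as `f`-invariant Boolean functions
on half-edges that vanish at the root. -/
def nonRootVertexSets (f : Perm H) (root : H) : AddSubgroup (H → Bool) where
  carrier := {B | (∀ h, B (f h) = B h) ∧ B root = false}
  add_mem' ha hb := ⟨fun h => by simp [ha.1, hb.1], by simp [ha.2, hb.2]; rfl⟩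
  zero_mem' := ⟨fun _ => rfl, rfl⟩
  neg_mem' ha := ha

def lowDegreeVertexSets (f : Perm H) (root : H) : Set (nonRootVertexSets f root) :=
  {B | ∀ h, (B : H → Bool) h = true → f (f h) = h}

def edgeTwists (α : Perm H) : AddSubgroup (H → Bool) where
  carrier := {s | ∀ h, s (α h) = s h}
  add_mem' ha hb h := by simp [ha h, hb h]
  zero_mem' _ := rfl
  neg_mem' ha := ha

def edgeCoboundary (α : Perm H) : (H → Bool) →+ (H → Bool) where
  toFun B h := B h + B (α h)
  map_zero' := rfl
  map_add' _ _ := funext fun _ => add_add_add_comm _ _ _ _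

theorem edgeCoboundary_apply (α : Perm H) (B : H → Bool) (h : H) :
    edgeCoboundary α B h = B h + B (α h) := rfl

theorem edgeCoboundary_mem_edgeTwists {α : Perm H} (hα : Involutive α) (B : H → Bool) :
    edgeCoboundary α B ∈ edgeTwists α := fun h => by
  rw [edgeCoboundary_apply, edgeCoboundary_apply, hα h, add_comm]

section Reembedding

variable {f : Perm H} {root : H}

theorem cycleIndicator_mem_nonRootVertexSets {v : H} (hv : ¬ f.SameCycle root v) :
    f.cycleIndicator v ∈ nonRootVertexSets f root :=
  ⟨cycleIndicator_apply_self v, by simpa [cycleIndicator, sameCycle_comm] using hv⟩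

theorem not_sameCycle_root_of_apply_eq_true (B : nonRootVertexSets f root) {h : H}
    (hB : (B : H → Bool) h = true) : ¬ f.SameCycle root h := fun hr => by
  have := hr.apply_eq B.2.1
  rw [B.2.2, hB] at this
  exact Bool.false_ne_true this

theorem exists_apply_eq_true {B : nonRootVertexSets f root} (hB : B ≠ 0) :
    ∃ v, (B : H → Bool) v = true := by
  by_contra! h
  exact hB (Subtype.ext (funext fun h' => Bool.eq_false_iff.2 (h h')))

theorem edgeCoboundary_injective {π α : Perm H}
    (hconn : ∀ x y : H, ∃ g ∈ Subgroup.closure ({π, α} : Set (Perm H)), g x = y)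
    {B₁ B₂ : nonRootVertexSets π root}
    (hB : edgeCoboundary α B₁ = edgeCoboundary α B₂) : B₁ = B₂ := by
  set D := B₁ - B₂
  have hDα : ∀ h, D.1 (α h) = D.1 h := fun h => by
    have := congrFun (show edgeCoboundary α D = 0 by simp [D, hB]) h
    exact ((BooleanRing.add_eq_zero' _ _).1 this).symm
  have hD : ∀ g ∈ Subgroup.closure ({π, α} : Set (Perm H)), ∀ h, D.1 (g h) = D.1 h :=
    fun g => apply_eq_of_mem_closure (S := {π, α}) (by rintro _ (rfl | rfl); exacts [D.2.1, hDα])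
  suffices D = 0 from sub_eq_zero.1 this
  ext y
  obtain ⟨g, hg, rfl⟩ := hconn root y
  exact (hD g hg root).trans D.2.2

variable (α : Perm H) (τ : H → Bool)

theorem reEmbed_iff {c c' : RibbonConfig H} :
    ReEmbed α root c c' ↔ ∃ v, ¬ c.1.SameCycle root v ∧
      c' = (c.1.reverseAlong (c.1.cycleIndicator v) (cycleIndicator_apply_self v),
        c.2 + edgeCoboundary α (c.1.cycleIndicator v)) := by
  refine exists_congr fun v => and_congr_right fun _ => ?_
  rw [Prod.ext_iff, Perm.ext_iff, funext_iff]
  refine and_congr (forall_congr' fun h => ?_) Iff.rfl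
  rw [reverseAlong_apply]
  by_cases hv : c.1.SameCycle v h <;> simp [cycleIndicator, hv]

theorem _root_.ReEmbed.add_twist {c c' : RibbonConfig H} (hcc' : ReEmbed α root c c')
    (s : H → Bool) : ReEmbed α root (c.1, c.2 + s) (c'.1, c'.2 + s) := by
  obtain ⟨v, hv, rfl⟩ := (reEmbed_iff α).1 hcc'
  exact (reEmbed_iff α).2 ⟨v, hv, Prod.ext rfl (add_right_comm _ _ _)⟩

/-- The configuration obtained from `(f, τ)` by re-embedding all the vertices in `B`. -/
def twistedReversal (B : nonRootVertexSets f root) : RibbonConfig H :=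
  (f.reverseAlong B B.2.1, τ + edgeCoboundary α B)

theorem twistedReversal_zero : twistedReversal α τ (0 : nonRootVertexSets f root) = (f, τ) :=
  Prod.ext reverseAlong_zero (by simp [twistedReversal])

theorem reEmbed_twistedReversal_iff (B : nonRootVertexSets f root) (c : RibbonConfig H) :
    ReEmbed α root (twistedReversal α τ B) c ↔
      ∃ v, ∃ hv : ¬ f.SameCycle root v, c = twistedReversal α τ
        (B + ⟨f.cycleIndicator v, cycleIndicator_mem_nonRootVertexSets hv⟩) := by
  simp only [reEmbed_iff, twistedReversal, sameCycle_reverseAlong, cycleIndicator_reverseAlong]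
  have hτ : ∀ C, τ + edgeCoboundary α B + edgeCoboundary α C = τ + edgeCoboundary α (B + C) :=
    fun C => by rw [map_add, add_assoc]
  refine exists_congr fun v =>
    ⟨fun ⟨hv, hc⟩ => ⟨hv, hc.trans ?_⟩, fun ⟨hv, hc⟩ => ⟨hv, hc.trans ?_⟩⟩
  all_goals
    have hrev := reverseAlong_reverseAlong (hB := B.2.1)
      (apply_reverseAlong_of_invariant (cycleIndicator_apply_self v))
      (B + ⟨_, cycleIndicator_mem_nonRootVertexSets hv⟩).2.1
  · exact Prod.ext hrev (hτ _)
  · exact Prod.ext hrev.symm (hτ _).symm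

theorem _root_.ReEmbed.symm {c c' : RibbonConfig H} (hcc' : ReEmbed α root c c') :
    ReEmbed α root c' c := by
  obtain ⟨f, τ⟩ := c
  rw [← twistedReversal_zero (root := root) α τ] at hcc' ⊢
  obtain ⟨v, hv, rfl⟩ := (reEmbed_twistedReversal_iff α τ 0 c').1 hcc'
  refine (reEmbed_twistedReversal_iff α τ _ _).2 ⟨v, hv, congrArg _ ?_⟩
  ext h
  simp [BooleanRing.add_self]

theorem eqvGen_twistedReversal [Finite H] (B : nonRootVertexSets f root) :
    Relation.EqvGen (ReEmbed α root) (twistedReversal α τ B) (f, τ) := by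
  induction hn : {h | (B : H → Bool) h = true}.ncard using Nat.strong_induction_on
    generalizing B with
  | _ n ih =>
    obtain rfl | hB := eq_or_ne B 0
    · rw [twistedReversal_zero]
      exact .refl _
    obtain ⟨v, hv⟩ := exists_apply_eq_true hB
    have hroot := not_sameCycle_root_of_apply_eq_true B hv
    set C : nonRootVertexSets f root := ⟨_, cycleIndicator_mem_nonRootVertexSets hroot⟩
    have hstep : ReEmbed α root (twistedReversal α τ (B + C)) (twistedReversal α τ B) := by
      refine (reEmbed_twistedReversal_iff α τ _ _).2 ⟨v, hroot, congrArg _ ?_⟩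
      ext h
      simp [C, add_assoc, BooleanRing.add_self]
    have hlt : {h | (B + C : H → Bool) h = true}.ncard < n :=
      hn ▸ Set.ncard_lt_ncard (setOf_add_cycleIndicator_ssubset B.2.1 hv)
    exact (Relation.EqvGen.rel _ _ hstep).symm.trans _ _ _ (ih _ hlt (B + C) rfl)

theorem exists_twistedReversal_iff_of_eqvGen {c c' : RibbonConfig H}
    (hcc' : Relation.EqvGen (ReEmbed α root) c c') :
    (∃ B : nonRootVertexSets f root, c = twistedReversal α τ B) ↔
      ∃ B : nonRootVertexSets f root, c' = twistedReversal α τ B := by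
  have step : ∀ {c c'}, ReEmbed α root c c' →
      (∃ B : nonRootVertexSets f root, c = twistedReversal α τ B) →
        ∃ B : nonRootVertexSets f root, c' = twistedReversal α τ B := by
    rintro c c' hr ⟨B, rfl⟩
    obtain ⟨v, hv, rfl⟩ := (reEmbed_twistedReversal_iff α τ B c').1 hr
    exact ⟨_, rfl⟩
  induction hcc' with
  | rel _ _ hr => exact ⟨step hr, step (hr.symm α)⟩
  | refl => exact Iff.rfl
  | symm _ _ _ ih => exact ih.symm
  | trans _ _ _ _ _ ih₁ ih₂ => exact ih₁.trans ih₂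

theorem mk_eq_mk_iff_exists_twistedReversal [Finite H] (c : RibbonConfig H) :
    Quot.mk (ReEmbed α root) c = Quot.mk _ (f, τ) ↔
      ∃ B : nonRootVertexSets f root, c = twistedReversal α τ B := by
  refine ⟨fun h => ?_, fun ⟨B, hB⟩ => hB ▸ Quot.eqvGen_sound (eqvGen_twistedReversal α τ B)⟩
  exact (exists_twistedReversal_iff_of_eqvGen α τ (Quot.eqvGen_exact h)).2
    ⟨0, (twistedReversal_zero α τ).symm⟩

theorem mk_eq_mk_iff [Finite H] (τ₁ τ₂ : H → Bool) :
    Quot.mk (ReEmbed α root) (f, τ₁) = Quot.mk _ (f, τ₂) ↔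
      ∃ B ∈ lowDegreeVertexSets f root, τ₁ = τ₂ + edgeCoboundary α B := by
  rw [mk_eq_mk_iff_exists_twistedReversal]
  refine exists_congr fun B => ?_
  rw [twistedReversal, Prod.ext_iff, eq_comm (a := f), reverseAlong_eq_self_iff]
  rfl

instance : AddAction (H → Bool) (Quot (ReEmbed α root)) where
  vadd s := Quot.map (fun c => (c.1, c.2 + s)) fun _ _ h => h.add_twist α s
  zero_vadd := Quot.ind fun c =>
    show Quot.mk _ (c.1, c.2 + 0) = _ from congrArg _ (Prod.ext rfl (add_zero c.2))
  add_vadd s t := Quot.ind fun c =>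
    show Quot.mk _ (c.1, c.2 + (s + t)) = Quot.mk _ (c.1, c.2 + t + s) from
      congrArg _ (Prod.ext rfl (by rw [add_comm s t, add_assoc]))

end Reembedding

section LowDegree

variable (π : Perm H) (root : H)

def lowDegreeHalfEdges : Set H := {h | π (π h) = h ∧ ¬ π.SameCycle root h}

theorem apply_mem_lowDegreeHalfEdges_iff {h : H} :
    π h ∈ lowDegreeHalfEdges π root ↔ h ∈ lowDegreeHalfEdges π root := by
  simp only [lowDegreeHalfEdges, Set.mem_ofPred_eq, sameCycle_apply_right]
  rw [π.injective.eq_iff]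

open Classical in
noncomputable def lowDegreeVertexSetsEquiv :
    lowDegreeVertexSets π root ≃
      {g : lowDegreeHalfEdges π root → Bool //
        ∀ x, g (π.subtypePerm (fun _ => apply_mem_lowDegreeHalfEdges_iff π root) x) = g x} where
  toFun B := ⟨fun x => B.1.1 x, fun x => B.1.2.1 x⟩
  invFun g := ⟨⟨fun h => if hh : h ∈ lowDegreeHalfEdges π root then g.1 ⟨h, hh⟩ else false,
    fun h => by
      beta_reduce
      by_cases hh : h ∈ lowDegreeHalfEdges π root
      · rw [dif_pos ((apply_mem_lowDegreeHalfEdges_iff π root).2 hh), dif_pos hh]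
        exact g.2 ⟨h, hh⟩
      · rw [dif_neg (mt (apply_mem_lowDegreeHalfEdges_iff π root).1 hh), dif_neg hh],
    dif_neg fun hh => hh.2 SameCycle.rfl⟩, fun h hE => by
      by_cases hh : h ∈ lowDegreeHalfEdges π root
      · exact hh.1
      · simp [hh] at hE⟩
  left_inv B := by
    refine Subtype.ext (Subtype.ext (funext fun h => ?_))
    by_cases hh : h ∈ lowDegreeHalfEdges π root
    · exact dif_pos hh
    · refine (dif_neg hh).trans (Bool.eq_false_iff.2 fun hB => hh ?_).symm
      exact ⟨B.2 h hB, not_sameCycle_root_of_apply_eq_true B.1 hB⟩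
  right_inv g := Subtype.ext (funext fun x => dif_pos x.2)

theorem card_lowDegreeVertexSets [Finite H] {V₁ V₂ : ℕ}
    (hV₁ : V₁ = Nat.card {h : H // π h = h ∧ ¬ π.SameCycle root h})
    (hV₂ : 2 * V₂ = Nat.card {h : H // π (π h) = h ∧ π h ≠ h ∧ ¬ π.SameCycle root h}) :
    Nat.card (lowDegreeVertexSets π root) = 2 ^ (V₁ + V₂) := by
  rw [Nat.card_congr (lowDegreeVertexSetsEquiv π root)]
  refine Involutive.card_invariant_bool_fun (fun x => Subtype.ext x.2.1)
    (hV₁.trans (Nat.card_congr ?_)) (hV₂.trans (Nat.card_congr ?_))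
  · exact { toFun h := ⟨⟨h.1, by rw [h.2.1, h.2.1], h.2.2⟩, Subtype.ext h.2.1⟩
            invFun x := ⟨x.1.1, congrArg Subtype.val x.2, x.1.2.2⟩
            left_inv _ := rfl
            right_inv _ := rfl }
  · exact { toFun h := ⟨⟨h.1, h.2.1, h.2.2.2⟩, fun e => h.2.2.1 (congrArg Subtype.val e)⟩
            invFun x := ⟨x.1.1, x.1.2.1, fun e => x.2 (Subtype.ext e), x.1.2.2⟩
            left_inv _ := rfl
            right_inv _ := rfl }

end LowDegree

theorem card_twist_stabilizer [Finite H] {π α : Perm H} {root : H} (hα : Involutive α)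
    (hconn : ∀ x y : H, ∃ g ∈ Subgroup.closure ({π, α} : Set (Perm H)), g x = y)
    (τ : H → Bool) :
    Nat.card {s : H → Bool // (∀ h, s (α h) = s h) ∧
        Quot.mk (ReEmbed α root) (π, τ + s) = Quot.mk _ (π, τ)} =
      Nat.card (lowDegreeVertexSets π root) := by
  refine (Nat.card_eq_of_bijective (fun B => ⟨edgeCoboundary α B,
    edgeCoboundary_mem_edgeTwists hα _, (mk_eq_mk_iff α _ _).2 ⟨B, B.2, rfl⟩⟩) ⟨?_, ?_⟩).symm
  · exact fun B₁ B₂ h => Subtype.ext (edgeCoboundary_injective hconn (congrArg Subtype.val h))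
  · rintro ⟨s, -, hs⟩
    obtain ⟨B, hB, hτ⟩ := (mk_eq_mk_iff α _ _).1 hs
    exact ⟨⟨B, hB⟩, Subtype.ext (add_left_cancel hτ).symm⟩

end RibbonConfig

open RibbonConfig in
theorem rooted_ribbon_twist_stabilizer_general {H : Type*} [Fintype H]
    (π α : Equiv.Perm H) (τ : H → Bool) (root : H)
    (hαinv : ∀ h, α (α h) = h) (hαfpf : ∀ h, α h ≠ h)
    (hconn : ∀ x y : H, ∃ g ∈ Subgroup.closure ({π, α} : Set (Equiv.Perm H)), g x = y)
    (V₁ V₂ E : ℕ)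
    (hV₁ : V₁ = Nat.card {h : H // π h = h ∧ ¬ π.SameCycle root h})
    (hV₂ : 2 * V₂ = Nat.card {h : H // π (π h) = h ∧ π h ≠ h ∧ ¬ π.SameCycle root h})
    (hE : 2 * E = Fintype.card H) :
    Nat.card {s : H → Bool // (∀ h, s (α h) = s h) ∧
        Quot.mk (ReEmbed α root) (π, fun h => xor (τ h) (s h))
          = Quot.mk (ReEmbed α root) (π, τ)}
      = 2 ^ (V₁ + V₂) ∧
    Nat.card {c : Quot (ReEmbed α root) // ∃ s : H → Bool, (∀ h, s (α h) = s h) ∧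
        c = Quot.mk (ReEmbed α root) (π, fun h => xor (τ h) (s h))}
      = 2 ^ (E - V₁ - V₂) := by
  have hstab := (card_twist_stabilizer hαinv hconn τ).trans
    (card_lowDegreeVertexSets π root hV₁ hV₂)
  refine ⟨hstab, ?_⟩
  set x := Quot.mk (ReEmbed α root) (π, τ)
  have hstab' : Nat.card (AddAction.stabilizer (edgeTwists α) x) = 2 ^ (V₁ + V₂) :=
    (Nat.card_congr (Equiv.subtypeSubtypeEquivSubtypeInter (· ∈ edgeTwists α) (· +ᵥ x = x))).trans
      hstab
  have htwists : Nat.card (edgeTwists α) = 2 ^ E :=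
    Involutive.card_invariant_bool_fun_of_forall_ne hαinv hαfpf
      (hE.trans Nat.card_eq_fintype_card.symm)
  have horbit : Nat.card (AddAction.orbit (edgeTwists α) x) * 2 ^ (V₁ + V₂) = 2 ^ E := by
    rw [← hstab', ← htwists, ← Nat.card_prod,
      Nat.card_congr (AddAction.orbitProdStabilizerEquivAddGroup _ x)]
  rw [Nat.sub_sub, ← eq_pow_sub_of_mul_pow_eq one_lt_two horbit]
  exact Nat.card_congr (Equiv.subtypeEquivRight fun c =>
    ⟨fun ⟨s, hs, hc⟩ => ⟨⟨s, hs⟩, hc.symm⟩, fun ⟨t, ht⟩ => ⟨t.1, t.2, ht.symm⟩⟩)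

/-- Stabilizer of a rooted connected ribbon graph under edge twists: the group
`T = (ℤ/2)^{E}` (functions on half-edges constant on edges) acts by adding twists; two
ribbon graphs are identified iff related by re-embeddings of non-root vertices (the
quotient `Quot (ReEmbed α root)`). The stabilizer has cardinality `2^{V₁+V₂}`, where
`V₁`, `V₂` are the numbers of non-root vertices of degree one and two; consequently the
orbit has cardinality `2^{E - V₁ - V₂}`. -/
theorem rooted_ribbon_twist_stabilizer {H : Type*} [Fintype H] [DecidableEq H]
    (π α : Equiv.Perm H) (τ : H → Bool) (root : H)
    (hαinv : ∀ h, α (α h) = h) (hαfpf : ∀ h, α h ≠ h)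
    (hτ : ∀ h, τ (α h) = τ h)
    (hconn : ∀ x y : H, ∃ g ∈ Subgroup.closure ({π, α} : Set (Equiv.Perm H)), g x = y)
    (V₁ V₂ E : ℕ)
    (hV₁ : V₁ = Nat.card {h : H // π h = h ∧ ¬ π.SameCycle root h})
    (hV₂ : 2 * V₂ = Nat.card {h : H // π (π h) = h ∧ π h ≠ h ∧ ¬ π.SameCycle root h})
    (hE : 2 * E = Fintype.card H) :
    Nat.card {s : H → Bool // (∀ h, s (α h) = s h) ∧
        Quot.mk (ReEmbed α root) (π, fun h => xor (τ h) (s h))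
          = Quot.mk (ReEmbed α root) (π, τ)}
      = 2 ^ (V₁ + V₂) ∧
    Nat.card {c : Quot (ReEmbed α root) // ∃ s : H → Bool, (∀ h, s (α h) = s h) ∧
        c = Quot.mk (ReEmbed α root) (π, fun h => xor (τ h) (s h))}
      = 2 ^ (E - V₁ - V₂) :=
  rooted_ribbon_twist_stabilizer_general π α τ root hαinv hαfpf hconn V₁ V₂ E hV₁ hV₂ hE
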